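/- Let γ > 1, 0 < a < b < ∞, and let (X, μ) be a finite measure space. Then there exists a constant C = C(a,b,γ) > 0 such that for every measurable ρ : X → [0,∞), every measurable r : X → [a,b], and every bounded measurable F : X → ℝ, one has ∫_X ρ F² dμ ≤ C ‖F‖_∞² ( μ(X) + ∫_X E(ρ|r) dμ ), where ‖F‖_∞ is the essential supremum of |F|. -/

import Mathlib

/-!
Up to the factor `1/(γ - 1)`, `E(ρ|r)` is the gap `ρ^γ - γ r^(γ-1) ρ + (γ - 1) r^γ` between
`s ↦ s^γ` and its tangent line at `r`, so it is nonnegative. Comparing instead with the tangent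
line at a point `K` where the slope `γ K^(γ-1)` is twice the largest slope `γ b^(γ-1)` over
`r ∈ [a, b]` shows that `E(ρ|r)` grows at least linearly in `ρ`; hence `ρ ≤ C (1 + E(ρ|r))`
pointwise. Integrating against `F² ≤ ‖F‖_∞²` gives the estimate.
-/

open MeasureTheory

/-- The pressure potential `P(s) = (s^γ − s)/(γ − 1)` associated with `p(s) = s^γ`. -/
noncomputable def Ppot (γ : ℝ) : ℝ → ℝ := fun s => (s ^ γ - s) / (γ - 1)

/-- The relative pressure energy `E(ρ|r) = P(ρ) − P'(r)(ρ − r) − P(r)`. -/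
noncomputable def relE (γ ρ r : ℝ) : ℝ :=
  Ppot γ ρ - deriv (Ppot γ) r * (ρ - r) - Ppot γ r

theorem hasDerivAt_Ppot {γ : ℝ} (hγ : 1 ≤ γ) (r : ℝ) :
    HasDerivAt (Ppot γ) ((γ * r ^ (γ - 1) - 1) / (γ - 1)) r :=
  ((Real.hasDerivAt_rpow_const (Or.inr hγ)).sub (hasDerivAt_id r)).div_const (γ - 1)

theorem relE_eq {γ r : ℝ} (hγ : 1 < γ) (hr : 0 ≤ r) (ρ : ℝ) :
    relE γ ρ r = (ρ ^ γ - γ * r ^ (γ - 1) * ρ + (γ - 1) * r ^ γ) / (γ - 1) := by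
  have hpow : r ^ γ = r ^ (γ - 1) * r := by
    rw [← Real.rpow_add_one' hr (by linarith), sub_add_cancel]
  have hγ1 : γ - 1 ≠ 0 := by linarith
  rw [relE, (hasDerivAt_Ppot hγ.le r).deriv, Ppot, Ppot, hpow]
  field_simp
  ring

theorem mul_rpow_sub_one_mul_le {γ x K : ℝ} (hγ : 1 ≤ γ) (hx : 0 ≤ x) (hK : 0 ≤ K) :
    γ * K ^ (γ - 1) * x ≤ x ^ γ + (γ - 1) * K ^ γ := by
  have hγ0 : 0 < γ := by linarith
  have hw : 0 ≤ 1 - 1 / γ := sub_nonneg.2 ((div_le_one hγ0).2 hγ)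
  have amgm := Real.geom_mean_le_arith_mean2_weighted (by positivity) hw
    (Real.rpow_nonneg hx γ) (Real.rpow_nonneg hK γ) (add_sub_cancel _ _)
  rw [← Real.rpow_mul hx, ← Real.rpow_mul hK, mul_one_div_cancel hγ0.ne', Real.rpow_one,
    mul_sub, mul_one, mul_one_div_cancel hγ0.ne'] at amgm
  calc γ * K ^ (γ - 1) * x = γ * (x * K ^ (γ - 1)) := by ring
    _ ≤ γ * (1 / γ * x ^ γ + (1 - 1 / γ) * K ^ γ) := by gcongr
    _ = x ^ γ + (γ - 1) * K ^ γ := by field_simp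

theorem relE_nonneg {γ ρ r : ℝ} (hγ : 1 < γ) (hρ : 0 ≤ ρ) (hr : 0 ≤ r) : 0 ≤ relE γ ρ r := by
  rw [relE_eq hγ hr]
  exact div_nonneg (by linarith [mul_rpow_sub_one_mul_le hγ.le hρ hr]) (by linarith)

theorem mul_le_relE_add {γ ρ r b : ℝ} (hγ : 1 < γ) (hρ : 0 ≤ ρ) (hr : 0 ≤ r) (hrb : r ≤ b) :
    γ * b ^ (γ - 1) * ρ ≤ (γ - 1) * (relE γ ρ r + (2 ^ (γ - 1)⁻¹ * b) ^ γ) := by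
  have hγ1 : 0 < γ - 1 := by linarith
  have hb : 0 ≤ b := hr.trans hrb
  set K := 2 ^ (γ - 1)⁻¹ * b
  have hK : K ^ (γ - 1) = 2 * b ^ (γ - 1) := by
    rw [Real.mul_rpow (by positivity) hb, ← Real.rpow_mul zero_le_two,
      inv_mul_cancel₀ hγ1.ne', Real.rpow_one]
  have tangent := mul_rpow_sub_one_mul_le hγ.le hρ (by positivity : 0 ≤ K)
  have slope : r ^ (γ - 1) ≤ b ^ (γ - 1) := Real.rpow_le_rpow hr hrb hγ1.le
  have hE : (γ - 1) * relE γ ρ r = ρ ^ γ - γ * r ^ (γ - 1) * ρ + (γ - 1) * r ^ γ := by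
    rw [relE_eq hγ hr]
    field_simp
  rw [hK] at tangent
  nlinarith [Real.rpow_nonneg hr γ, mul_le_mul_of_nonneg_right slope (mul_nonneg hγ1.le hρ)]

theorem le_mul_one_add_relE {γ b : ℝ} (hγ : 1 < γ) (hb : 0 < b) :
    ∃ C > 0, ∀ ρ r, 0 ≤ ρ → 0 ≤ r → r ≤ b → ρ ≤ C * (1 + relE γ ρ r) := by
  have hγ1 : 0 < γ - 1 := by linarith
  set Kγ := (2 ^ (γ - 1)⁻¹ * b) ^ γ
  have hKγ : 0 ≤ Kγ := by positivity
  refine ⟨(γ - 1) * (1 + Kγ) / (γ * b ^ (γ - 1)), by positivity, fun ρ r hρ hr hrb => ?_⟩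
  have hE := relE_nonneg hγ hρ hr
  rw [div_mul_eq_mul_div, le_div_iff₀ (by positivity)]
  nlinarith [mul_le_relE_add hγ hρ hr hrb, mul_nonneg (mul_nonneg hγ1.le hE) hKγ]

section Integrals

variable {X : Type*} [MeasurableSpace X] {μ : Measure X}

theorem lintegral_ofReal_mul_sq_le {ρ F : X → ℝ} (hF : eLpNorm F ⊤ μ ≠ ⊤) :
    ∫⁻ x, ENNReal.ofReal (ρ x * F x ^ 2) ∂μ ≤
      eLpNorm F ⊤ μ ^ 2 * ∫⁻ x, ENNReal.ofReal (ρ x) ∂μ := by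
  have hae : ∀ᵐ x ∂μ,
      ENNReal.ofReal (ρ x * F x ^ 2) ≤ eLpNorm F ⊤ μ ^ 2 * ENNReal.ofReal (ρ x) := by
    filter_upwards [ae_le_eLpNormEssSup (f := F) (μ := μ)] with x hx
    rw [ENNReal.ofReal_mul' (sq_nonneg _), ← sq_abs, ENNReal.ofReal_pow (abs_nonneg _),
      ← Real.enorm_eq_ofReal_abs, mul_comm, eLpNorm_exponent_top]
    gcongr
  calc ∫⁻ x, ENNReal.ofReal (ρ x * F x ^ 2) ∂μ
      ≤ ∫⁻ x, eLpNorm F ⊤ μ ^ 2 * ENNReal.ofReal (ρ x) ∂μ := lintegral_mono_ae hae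
    _ = eLpNorm F ⊤ μ ^ 2 * ∫⁻ x, ENNReal.ofReal (ρ x) ∂μ :=
      lintegral_const_mul' _ _ (ENNReal.pow_ne_top hF)

theorem lintegral_ofReal_le_of_le_mul_one_add {f g : X → ℝ} {C : ℝ} (hC : 0 ≤ C)
    (hfg : ∀ x, f x ≤ C * (1 + g x)) :
    ∫⁻ x, ENNReal.ofReal (f x) ∂μ ≤
      ENNReal.ofReal C * (μ Set.univ + ∫⁻ x, ENNReal.ofReal (g x) ∂μ) := by
  have hpointwise : ∀ x, ENNReal.ofReal (f x) ≤ ENNReal.ofReal C * (1 + ENNReal.ofReal (g x)) :=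
    fun x => calc
      ENNReal.ofReal (f x) ≤ ENNReal.ofReal C * ENNReal.ofReal (1 + g x) := by
        rw [← ENNReal.ofReal_mul hC]
        exact ENNReal.ofReal_le_ofReal (hfg x)
      _ ≤ ENNReal.ofReal C * (1 + ENNReal.ofReal (g x)) := by
        gcongr
        simpa using ENNReal.ofReal_add_le (p := 1) (q := g x)
  calc ∫⁻ x, ENNReal.ofReal (f x) ∂μ
      ≤ ∫⁻ x, ENNReal.ofReal C * (1 + ENNReal.ofReal (g x)) ∂μ := lintegral_mono hpointwise
    _ = ENNReal.ofReal C * (μ Set.univ + ∫⁻ x, ENNReal.ofReal (g x) ∂μ) := by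
      rw [lintegral_const_mul' _ _ ENNReal.ofReal_ne_top, lintegral_add_left measurable_const,
        lintegral_one]

end Integrals

theorem stmt_11_general (γ a b : ℝ) (hγ : 1 < γ) (ha : 0 < a) (hab : a < b)
    {X : Type*} [MeasurableSpace X] (μ : Measure X) :
    ∃ C > 0, ∀ ρ r F : X → ℝ, Measurable ρ → Measurable r → Measurable F →
      (∀ x, 0 ≤ ρ x) → (∀ x, r x ∈ Set.Icc a b) → eLpNorm F ⊤ μ < ⊤ →
      ∫⁻ x, ENNReal.ofReal (ρ x * (F x) ^ 2) ∂μ ≤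
        ENNReal.ofReal C * (eLpNorm F ⊤ μ) ^ 2 *
          (μ Set.univ + ∫⁻ x, ENNReal.ofReal (relE γ (ρ x) (r x)) ∂μ) := by
  obtain ⟨C, hC, hbound⟩ := le_mul_one_add_relE hγ (ha.trans hab)
  refine ⟨C, hC, fun ρ r F _ _ _ hρ hr hF => ?_⟩
  calc ∫⁻ x, ENNReal.ofReal (ρ x * (F x) ^ 2) ∂μ
      ≤ eLpNorm F ⊤ μ ^ 2 * ∫⁻ x, ENNReal.ofReal (ρ x) ∂μ := lintegral_ofReal_mul_sq_le hF.ne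
    _ ≤ eLpNorm F ⊤ μ ^ 2 *
        (ENNReal.ofReal C * (μ Set.univ + ∫⁻ x, ENNReal.ofReal (relE γ (ρ x) (r x)) ∂μ)) := by
      gcongr
      exact lintegral_ofReal_le_of_le_mul_one_add hC.le fun x =>
        hbound _ _ (hρ x) (ha.le.trans (hr x).1) (hr x).2
    _ = ENNReal.ofReal C * eLpNorm F ⊤ μ ^ 2 *
        (μ Set.univ + ∫⁻ x, ENNReal.ofReal (relE γ (ρ x) (r x)) ∂μ) := by ring

/-- Abstract form of estimate (4.4): `∫ ρ F² ≤ C ‖F‖_∞² (μ(X) + ∫ E(ρ|r))`. -/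
theorem stmt_11 (γ a b : ℝ) (hγ : 1 < γ) (ha : 0 < a) (hab : a < b)
    {X : Type*} [MeasurableSpace X] (μ : Measure X) [IsFiniteMeasure μ] :
    ∃ C > 0, ∀ ρ r F : X → ℝ, Measurable ρ → Measurable r → Measurable F →
      (∀ x, 0 ≤ ρ x) → (∀ x, r x ∈ Set.Icc a b) → eLpNorm F ⊤ μ < ⊤ →
      ∫⁻ x, ENNReal.ofReal (ρ x * (F x) ^ 2) ∂μ ≤
        ENNReal.ofReal C * (eLpNorm F ⊤ μ) ^ 2 *
          (μ Set.univ + ∫⁻ x, ENNReal.ofReal (relE γ (ρ x) (r x)) ∂μ) :=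
  stmt_11_general γ a b hγ ha hab μ
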